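/- arXiv:2410.18056 — 2 statements merged into one kernel-verified Lean document; each statement's English description precedes it below -/
import Mathlib

section
/- The finite bivariate N-Konhauser polynomial has the expansion ₖN_{s;υ}^{(p,q)}(t,w) = s! t^s Γ(p-s) Σ_{k=0}^{s} (-1)^k w^{υk} L_{s-k}^{(p-2s-1)}(1/t) / (k! Γ(p-s-k) Γ(q+1+υk)) for t > 0, in terms of generalized Laguerre polynomials. -/
open Real MeasureTheory Finset

/-- Pochhammer symbol (a)_n = a(a+1)⋯(a+n-1). -/
noncomputable def poch (a : ℝ) (n : ℕ) : ℝ := ∏ i ∈ Finset.range n, (a + i)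

/-- Generalized binomial coefficient C(a,k) = a(a-1)⋯(a-k+1)/k!. -/
noncomputable def gchoose (a : ℝ) (k : ℕ) : ℝ :=
  (∏ i ∈ Finset.range k, (a - i)) / k.factorial

/-- Konhauser polynomial of the first kind Z_s^{(χ)}(w;υ). -/
noncomputable def konZ (s : ℕ) (χ : ℝ) (υ : ℕ) (w : ℝ) : ℝ :=
  (Real.Gamma ((υ : ℝ) * (s : ℝ) + χ + 1) / s.factorial) *
    ∑ l ∈ Finset.range (s + 1),
      (-1 : ℝ) ^ l * (s.choose l : ℝ) * w ^ (υ * l) / Real.Gamma ((υ : ℝ) * (l : ℝ) + χ + 1)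

/-- Konhauser polynomial of the second kind Y_s^{(χ)}(w;υ). -/
noncomputable def konY (s : ℕ) (χ : ℝ) (υ : ℕ) (w : ℝ) : ℝ :=
  (1 / (s.factorial : ℝ)) *
    ∑ m ∈ Finset.range (s + 1), w ^ m / m.factorial *
      ∑ l ∈ Finset.range (m + 1),
        (-1 : ℝ) ^ l * (m.choose l : ℝ) * poch ((χ + (l : ℝ) + 1) / (υ : ℝ)) s

/-- Finite orthogonal polynomial N_s^{(p)}(w). -/
noncomputable def finN (s : ℕ) (p : ℝ) (w : ℝ) : ℝ :=
  (-1 : ℝ) ^ s *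
    ∑ k ∈ Finset.range (s + 1),
      (k.factorial : ℝ) * gchoose (p - (s : ℝ) - 1) k * (s.choose (s - k) : ℝ) * (-w) ^ k

/-- Generalized Laguerre polynomial L_n^{(α)}(x). -/
noncomputable def lagL (n : ℕ) (α : ℝ) (x : ℝ) : ℝ :=
  ∑ k ∈ Finset.range (n + 1),
    (-1 : ℝ) ^ k * gchoose ((n : ℝ) + α) (n - k) * x ^ k / k.factorial

/-- Finite bivariate N-Konhauser polynomial (first set) ₖN_{s;υ}^{(p,q)}(t,w). -/
noncomputable def NK (s : ℕ) (υ : ℕ) (p q : ℝ) (t w : ℝ) : ℝ :=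
  Real.Gamma (p - (s : ℝ)) *
    ∑ k ∈ Finset.range (s + 1), ∑ m ∈ Finset.range (s - k + 1),
      poch (-(s : ℝ)) (k + m) * t ^ (s - k) * w ^ (υ * m) /
        (Real.Gamma (p - 2 * (s : ℝ) + (k : ℝ)) * Real.Gamma (q + 1 + (υ : ℝ) * (m : ℝ)) *
          k.factorial * m.factorial)

/-- Finite bivariate N-Konhauser polynomial (second set) ₖ𝒩_{s;υ}^{(p,q)}(t,w). -/
noncomputable def NK2 (s : ℕ) (υ : ℕ) (p q : ℝ) (t w : ℝ) : ℝ :=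
  finN s p t * ∑ k ∈ Finset.range (s + 1), konY k q υ w

/-- Generalized Laguerre-Konhauser polynomial of Bin-Saad ᵤL_s^{(p,q)}(t,w). -/
noncomputable def LKgen (s : ℕ) (υ : ℕ) (p q : ℝ) (t w : ℝ) : ℝ :=
  (s.factorial : ℝ) *
    ∑ k ∈ Finset.range (s + 1), ∑ m ∈ Finset.range (s - k + 1),
      (-1 : ℝ) ^ (k + m) * t ^ ((k : ℝ) + p) * w ^ ((υ : ℝ) * (m : ℝ) + q) /
        ((k.factorial : ℝ) * m.factorial * (s - k - m).factorial *
          Real.Gamma ((k : ℝ) + p + 1) * Real.Gamma (q + (υ : ℝ) * (m : ℝ) + 1))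

/-- Bivariate biorthogonal Laguerre-Konhauser polynomial ₖL_{s;υ}^{(p,q)}(t,w). -/
noncomputable def KL (s : ℕ) (υ : ℕ) (p q : ℝ) (t w : ℝ) : ℝ :=
  (Real.Gamma (p + 1 + (s : ℝ)) / s.factorial) *
    ∑ k ∈ Finset.range (s + 1), ∑ m ∈ Finset.range (s - k + 1),
      poch (-(s : ℝ)) (k + m) * t ^ k * w ^ (υ * m) /
        (Real.Gamma (p + 1 + (k : ℝ)) * Real.Gamma (q + 1 + (υ : ℝ) * (m : ℝ)) *
          k.factorial * m.factorial)

lemma poch_neg_nat (s j : ℕ) (h : j ≤ s) :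
    poch (-(s:ℝ)) j * ((s - j).factorial : ℝ) = (-1)^j * s.factorial := by
  induction j with
  | zero => simp [poch]
  | succ n ih =>
    have hn : n ≤ s := Nat.le_of_succ_le h
    have hcast : (-(s:ℝ) + n) = -(((s - n : ℕ)):ℝ) := by
      rw [Nat.cast_sub hn]; ring
    have h2 : ((s - n).factorial : ℝ) = ((s - (n+1)).factorial : ℝ) * ((s - n : ℕ):ℝ) := by
      rw [show s - n = (s - (n+1)) + 1 by omega, Nat.factorial_succ]; push_cast; ring
    calc poch (-(s:ℝ)) (n+1) * ((s - (n+1)).factorial : ℝ)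
        = poch (-(s:ℝ)) n * (-(s:ℝ) + n) * ((s-(n+1)).factorial : ℝ) := by
          rw [poch, Finset.prod_range_succ, ← poch]
      _ = -(poch (-(s:ℝ)) n * (((s-(n+1)).factorial : ℝ) * ((s-n:ℕ):ℝ))) := by
          rw [hcast]; ring
      _ = -(poch (-(s:ℝ)) n * ((s-n).factorial : ℝ)) := by rw [← h2]
      _ = (-1)^(n+1) * s.factorial := by rw [ih hn]; ring

lemma Gamma_add_nat_prod (x : ℝ) (hx : 0 < x) (n : ℕ) :
    Real.Gamma (x + n) = Real.Gamma x * ∏ i ∈ Finset.range n, (x + i) := by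
  induction n with
  | zero => simp
  | succ n ih =>
    have h2 : x + (n:ℝ) ≠ 0 := by positivity
    rw [show x + ((n+1:ℕ):ℝ) = (x + n) + 1 by push_cast; ring,
      Real.Gamma_add_one h2, ih, Finset.prod_range_succ]; ring

lemma tri_swap (n : ℕ) (f : ℕ → ℕ → ℝ) :
    ∑ k ∈ Finset.range (n+1), ∑ m ∈ Finset.range (n-k+1), f k m
      = ∑ m ∈ Finset.range (n+1), ∑ k ∈ Finset.range (n-m+1), f k m := by
  have key : ∀ g : ℕ → ℕ → ℝ,
      ∑ k ∈ Finset.range (n+1), ∑ m ∈ Finset.range (n-k+1), g k m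
        = ∑ k ∈ Finset.range (n+1), ∑ m ∈ Finset.range (n+1),
            if k + m ≤ n then g k m else 0 := by
    intro g
    refine Finset.sum_congr rfl fun k hk => ?_
    have hk' : k ≤ n := Nat.lt_succ_iff.mp (Finset.mem_range.mp hk)
    calc ∑ m ∈ Finset.range (n-k+1), g k m
        = ∑ m ∈ Finset.range (n-k+1), (if k + m ≤ n then g k m else 0) :=
          Finset.sum_congr rfl fun m hm => by
            rw [if_pos]; have := Finset.mem_range.mp hm; omega
      _ = ∑ m ∈ Finset.range (n+1), (if k + m ≤ n then g k m else 0) := by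
          refine Finset.sum_subset (Finset.range_subset_range.mpr (by omega)) ?_
          intro m _ hm'
          rw [if_neg]
          simp only [Finset.mem_range] at hm'
          omega
  rw [key f, key (fun m k => f k m), Finset.sum_comm]
  exact Finset.sum_congr rfl fun m _ => Finset.sum_congr rfl fun k _ => by
    rw [Nat.add_comm]

theorem NK_eq_laguerre_expansion (υ : ℕ) (hυ : 0 < υ) (p q : ℝ) (hq : q > -1) (s : ℕ)
    (hs : (s : ℝ) < (p - 1) / 2) (t w : ℝ) (ht : 0 < t) :
    NK s υ p q t w =
      (s.factorial : ℝ) * t ^ s * Real.Gamma (p - (s : ℝ)) *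
        ∑ k ∈ Finset.range (s + 1),
          (-1 : ℝ) ^ k * w ^ (υ * k) * lagL (s - k) (p - 2 * (s : ℝ) - 1) (1 / t) /
            ((k.factorial : ℝ) * Real.Gamma (p - (s : ℝ) - (k : ℝ)) *
              Real.Gamma (q + 1 + (υ : ℝ) * (k : ℝ))) := by
  have hps : (1:ℝ) < p - 2 * s := by linarith
  rw [NK]
  simp only [Finset.mul_sum]
  rw [tri_swap]
  simp only [lagL, Finset.mul_sum, Finset.sum_div]
  refine Finset.sum_congr rfl fun x hx => Finset.sum_congr rfl fun y hy => ?_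
  have hx' : x ≤ s := Nat.lt_succ_iff.mp (Finset.mem_range.mp hx)
  have hy' : y ≤ s - x := Nat.lt_succ_iff.mp (Finset.mem_range.mp hy)
  set j := s - x - y with hjdef
  have hjc : (j:ℝ) = (s:ℝ) - x - y := by
    rw [hjdef, Nat.cast_sub (by omega : y ≤ s - x), Nat.cast_sub hx']
  have hG1pos : (0:ℝ) < p - 2*(s:ℝ) + y := by
    have : (0:ℝ) ≤ y := Nat.cast_nonneg y
    linarith
  have hPpos : (0:ℝ) < ∏ i ∈ Finset.range j, (p - 2*(s:ℝ) + y + i) :=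
    Finset.prod_pos fun i _ => by have : (0:ℝ) ≤ i := Nat.cast_nonneg i; linarith
  have hGam : Real.Gamma (p - (s:ℝ) - x)
      = Real.Gamma (p - 2*(s:ℝ) + y) * ∏ i ∈ Finset.range j, (p - 2*(s:ℝ) + y + i) := by
    have h := Gamma_add_nat_prod _ hG1pos j
    rw [show p - 2*(s:ℝ) + y + (j:ℝ) = p - s - x by rw [hjc]; ring] at h
    exact h
  have hgch : gchoose ((↑(s - x):ℝ) + (p - 2 * (s:ℝ) - 1)) j
      = (∏ i ∈ Finset.range j, (p - 2*(s:ℝ) + y + i)) / (j.factorial : ℝ) := by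
    rw [gchoose]
    congr 1
    rw [← Finset.prod_range_reflect (fun i => p - 2*(s:ℝ) + y + i) j]
    refine Finset.prod_congr rfl fun i hi => ?_
    have hij : i < j := Finset.mem_range.mp hi
    show (↑(s - x):ℝ) + (p - 2 * (s:ℝ) - 1) - i = p - 2*(s:ℝ) + y + (↑(j - 1 - i):ℝ)
    rw [Nat.cast_sub hx', show j - 1 - i = j - (i+1) by omega,
      Nat.cast_sub (by omega : i + 1 ≤ j), hjc]
    push_cast
    ring
  have hjne : ((j.factorial : ℝ)) ≠ 0 := Nat.cast_ne_zero.mpr (Nat.factorial_ne_zero j)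
  have hpoch : poch (-(s:ℝ)) (y + x) = (-1:ℝ)^(y+x) * s.factorial / (j.factorial : ℝ) := by
    rw [eq_div_iff hjne]
    have h := poch_neg_nat s (y+x) (by omega)
    rwa [show s - (y+x) = j by omega] at h
  have hts : t ^ (s - y) = t ^ s * (1/t)^y := by
    rw [pow_sub₀ t ht.ne' (by omega : y ≤ s), one_div, inv_pow]
  rw [hGam, hgch, hpoch, hts]
  have hΓq : Real.Gamma (q + 1 + (υ:ℝ) * x) ≠ 0 := by
    refine (Real.Gamma_pos_of_pos ?_).ne'
    have h1 : (0:ℝ) ≤ (υ:ℝ) * x := by positivity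
    linarith
  have hΓ1 : Real.Gamma (p - 2*(s:ℝ) + y) ≠ 0 := (Real.Gamma_pos_of_pos hG1pos).ne'
  have hxf : ((x.factorial : ℝ)) ≠ 0 := Nat.cast_ne_zero.mpr (Nat.factorial_ne_zero x)
  have hyf : ((y.factorial : ℝ)) ≠ 0 := Nat.cast_ne_zero.mpr (Nat.factorial_ne_zero y)
  have hPne := hPpos.ne'
  field_simp
  have hPne' : ∏ i ∈ Finset.range j, (p - (s:ℝ) * 2 + y + i) ≠ 0 := by
    simp only [mul_comm (s:ℝ) 2]; exact hPne
  rw [mul_div_mul_right _ _ hPne']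
  ring
end

section
/- The first set of finite bivariate N-Konhauser polynomials satisfies ∂_w ₖN_{s;υ}^{(p,q)}(t,w) = -sυ(p-s-1) t w^{υ-1} ₖN_{s-1;υ}^{(p-2,q+υ)}(t,w) for s ≥ 1. -/
open Real MeasureTheory Finset

lemma poch_succ' (a : ℝ) (n : ℕ) : poch a (n+1) = a * poch (a+1) n := by
  unfold poch
  rw [Finset.prod_range_succ', mul_comm]
  congr 1
  · simp
  · apply Finset.prod_congr rfl; intro i _; push_cast; ring

theorem NK_deriv_w (υ : ℕ) (hυ : 0 < υ) (p q : ℝ) (hq : q > -1) (s : ℕ) (hs : 1 ≤ s)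
    (hsp : (s : ℝ) < (p - 1) / 2) (t w : ℝ) :
    deriv (fun x => NK s υ p q t x) w =
      -((s : ℝ) * (υ : ℝ) * (p - (s : ℝ) - 1)) * t * w ^ (υ - 1) *
        NK (s - 1) υ (p - 2) (q + (υ : ℝ)) t w := by
  have hp : (2 : ℝ) * s + 1 < p := by linarith [hsp]
  have hs1 : (1:ℝ) ≤ (s:ℝ) := by exact_mod_cast hs
  set c : ℕ → ℕ → ℝ := fun k m =>
    poch (-(s : ℝ)) (k + m) * t ^ (s - k) /
        (Real.Gamma (p - 2 * (s : ℝ) + (k : ℝ)) * Real.Gamma (q + 1 + (υ : ℝ) * (m : ℝ)) *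
          k.factorial * m.factorial) with hc
  have hfun : (fun x => NK s υ p q t x)
      = fun x => Real.Gamma (p - (s : ℝ)) * ∑ k ∈ Finset.range (s + 1),
          ∑ m ∈ Finset.range (s - k + 1), c k m * x ^ (υ * m) := by
    funext x
    unfold NK
    congr 1
    refine Finset.sum_congr rfl fun k _ => Finset.sum_congr rfl fun m _ => ?_
    rw [hc]; ring
  have h1 : deriv (fun x => NK s υ p q t x) w
      = Real.Gamma (p - (s : ℝ)) * ∑ k ∈ Finset.range (s + 1),
          ∑ m ∈ Finset.range (s - k + 1), c k m * ((υ * m : ℕ) * w ^ (υ * m - 1)) := by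
    rw [hfun, deriv_const_mul_field]
    congr 1
    rw [deriv_fun_sum (fun k _ => DifferentiableAt.fun_sum
      (fun m _ => (differentiableAt_pow (υ*m)).const_mul (c k m)))]
    refine Finset.sum_congr rfl fun k _ => ?_
    rw [deriv_fun_sum (fun m _ => (differentiableAt_pow (υ*m)).const_mul (c k m))]
    refine Finset.sum_congr rfl fun m _ => ?_
    rw [deriv_const_mul _ (differentiableAt_pow (υ*m)), deriv_pow_field]
  rw [h1]
  unfold NK
  rw [Nat.sub_add_cancel hs]
  rw [Finset.sum_range_succ]
  have hlast : ∑ m ∈ Finset.range (s - s + 1), c s m * ((υ * m : ℕ) * w ^ (υ * m - 1)) = 0 := by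
    simp
  rw [hlast, add_zero]
  simp only [Finset.mul_sum]
  refine Finset.sum_congr rfl fun k hk => ?_
  replace hk := Finset.mem_range.mp hk
  rw [show s - k + 1 = (s - 1 - k + 1) + 1 from by omega, Finset.sum_range_succ']
  rw [show Real.Gamma (p - (s:ℝ)) * (c k 0 * ((υ * 0 : ℕ) * w ^ (υ * 0 - 1))) = 0 from by simp,
    add_zero]
  refine Finset.sum_congr rfl fun m hm => ?_
  -- termwise equality
  have hcast : ((s-1:ℕ):ℝ) = (s:ℝ) - 1 := by rw [Nat.cast_sub hs, Nat.cast_one]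
  have hne : p - (s:ℝ) - 1 ≠ 0 := ne_of_gt (by linarith)
  simp only [hc]
  rw [hcast]
  have hG := Real.Gamma_add_one hne
  rw [show p - (s:ℝ) - 1 + 1 = p - (s:ℝ) by ring] at hG
  rw [hG]
  rw [show k + (m+1) = (k+m)+1 from rfl, poch_succ',
    show -(s:ℝ) + 1 = -((s:ℝ)-1) by ring]
  have hexp : υ * (m + 1) - 1 = (υ - 1) + υ * m := by
    obtain ⟨v, rfl⟩ : ∃ v, υ = v + 1 := ⟨υ - 1, by omega⟩
    rw [show (v+1) * (m+1) = ((v+1)*m + v) + 1 by ring, Nat.succ_sub_one, Nat.add_sub_cancel]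
    exact Nat.add_comm _ _
  rw [hexp, pow_add]
  rw [show s - k = (s-1-k)+1 from by omega, pow_succ]
  rw [show p - 2 - 2*((s:ℝ)-1) + (k:ℝ) = p - 2*(s:ℝ) + (k:ℝ) by ring,
    show p - 2 - ((s:ℝ)-1) = p - (s:ℝ) - 1 by ring]
  rw [Nat.factorial_succ]
  push_cast
  rw [show q + 1 + (υ:ℝ) * ((m:ℝ)+1) = q + (υ:ℝ) + 1 + (υ:ℝ)*(m:ℝ) by ring]
  have hG1 : Real.Gamma (p - 2*(s:ℝ) + (k:ℝ)) ≠ 0 :=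
    ne_of_gt (Real.Gamma_pos_of_pos (by have : (0:ℝ) ≤ (k:ℝ) := Nat.cast_nonneg k; linarith))
  have hG2 : Real.Gamma (q + (υ:ℝ) + 1 + (υ:ℝ)*(m:ℝ)) ≠ 0 := by
    refine ne_of_gt (Real.Gamma_pos_of_pos ?_)
    have h1 : (0:ℝ) ≤ (υ:ℝ) := Nat.cast_nonneg υ
    have h2 : (0:ℝ) ≤ (υ:ℝ)*(m:ℝ) := by positivity
    linarith
  have hkf : ((k.factorial:ℝ)) ≠ 0 := Nat.cast_ne_zero.mpr k.factorial_ne_zero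
  have hmf : ((m.factorial:ℝ)) ≠ 0 := Nat.cast_ne_zero.mpr m.factorial_ne_zero
  have hm1 : ((m:ℝ)+1) ≠ 0 := by positivity
  field_simp
end
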